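/- There exist a finite set Λ ⊂ ℤ² and smooth functions γ_ξ : B_{1/2}(Id) → ℝ for each ξ ∈ Λ, where B_{1/2}(Id) is the metric ball of radius 1/2 around the identity in the space of symmetric 2×2 real matrices, such that every R ∈ B_{1/2}(Id) satisfies R = Σ_{ξ∈Λ} γ_ξ(R)² ξ ⊗ ξ. -/
import Mathlib


attribute [local instance] Matrix.normedAddCommGroup Matrix.normedSpace

/-- The rank-one symmetric matrix `ξ ⊗ ξ` with entries `ξ_i ξ_j`, for `ξ ∈ ℤ²`. -/
noncomputable def xiOuter (ξ : ℤ × ℤ) : Matrix (Fin 2) (Fin 2) ℝ :=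
  Matrix.vecMulVec ![(ξ.1 : ℝ), (ξ.2 : ℝ)] ![(ξ.1 : ℝ), (ξ.2 : ℝ)]

noncomputable def gam : (ℤ × ℤ) → Matrix (Fin 2) (Fin 2) ℝ → ℝ :=
  fun ξ R => if ξ = (1,0) then Real.sqrt (R 0 0 - 1/2)
      else if ξ = (0,1) then Real.sqrt (R 1 1 - 1/2)
      else if ξ = (1,1) then Real.sqrt ((1 + 2 * R 0 1)/4)
      else Real.sqrt ((1 - 2 * R 0 1)/4)

lemma gam_a : gam (1,0) = fun R => Real.sqrt (R 0 0 - 1/2) := by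
  funext R; simp [gam, Prod.ext_iff]
lemma gam_b : gam (0,1) = fun R => Real.sqrt (R 1 1 - 1/2) := by
  funext R; simp [gam, Prod.ext_iff]
lemma gam_c : gam (1,1) = fun R => Real.sqrt ((1 + 2 * R 0 1)/4) := by
  funext R; simp [gam, Prod.ext_iff]
lemma gam_d : gam (1,-1) = fun R => Real.sqrt ((1 - 2 * R 0 1)/4) := by
  funext R; simp [gam, Prod.ext_iff]

private lemma sqrt_comp_smooth (f : Matrix (Fin 2) (Fin 2) ℝ → ℝ)
    (hf : ContDiff ℝ (⊤ : ℕ∞) f) (S : Set (Matrix (Fin 2) (Fin 2) ℝ))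
    (hpos : ∀ R ∈ S, 0 < f R) :
    ContDiffOn ℝ (⊤ : ℕ∞) (fun R => Real.sqrt (f R)) S := fun x hx =>
  ((Real.contDiffAt_sqrt (ne_of_gt (hpos x hx))).comp_contDiffWithinAt x
    (hf.contDiffAt.contDiffWithinAt))

private lemma entry_bound (R : Matrix (Fin 2) (Fin 2) ℝ) (h : ‖R - 1‖ < 1/2) (i j : Fin 2) :
    |R i j - (1 : Matrix (Fin 2) (Fin 2) ℝ) i j| < 1/2 := by
  calc |R i j - (1 : Matrix (Fin 2) (Fin 2) ℝ) i j| = ‖(R - 1) i j‖ := by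
        simp [Real.norm_eq_abs]
    _ ≤ ‖R - 1‖ := Matrix.norm_entry_le_entrywise_sup_norm _
    _ < 1/2 := h

private lemma bound_00 (R : Matrix (Fin 2) (Fin 2) ℝ) (h : ‖R - 1‖ < 1/2) :
    0 < R 0 0 - 1/2 := by
  have := entry_bound R h 0 0
  simp [Matrix.one_apply] at this
  linarith [(abs_lt.mp this).1]

private lemma bound_11 (R : Matrix (Fin 2) (Fin 2) ℝ) (h : ‖R - 1‖ < 1/2) :
    0 < R 1 1 - 1/2 := by
  have := entry_bound R h 1 1
  simp [Matrix.one_apply] at this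
  linarith [(abs_lt.mp this).1]

private lemma bound_01 (R : Matrix (Fin 2) (Fin 2) ℝ) (h : ‖R - 1‖ < 1/2) :
    |R 0 1| < 1/2 := by
  have := entry_bound R h 0 1
  simpa [Matrix.one_apply] using this

/-- Geometric lemma: there exist a finite set `Λ ⊂ ℤ²` and smooth functions
`γ_ξ : B_{1/2}(Id) → ℝ`, on the ball of radius `1/2` around the identity in the space of
symmetric 2×2 real matrices, such that every symmetric `R` with `‖R - Id‖ < 1/2` satisfies
`R = ∑_{ξ∈Λ} γ_ξ(R)² ξ ⊗ ξ`. -/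
theorem stmt_3 :
    ∃ (Λ : Finset (ℤ × ℤ)) (γ : (ℤ × ℤ) → Matrix (Fin 2) (Fin 2) ℝ → ℝ),
      (∀ ξ ∈ Λ, ContDiffOn ℝ (⊤ : ℕ∞) (γ ξ)
        {R : Matrix (Fin 2) (Fin 2) ℝ | R.IsSymm ∧ ‖R - 1‖ < 1 / 2}) ∧
      (∀ R : Matrix (Fin 2) (Fin 2) ℝ, R.IsSymm → ‖R - 1‖ < 1 / 2 →
        R = ∑ ξ ∈ Λ, (γ ξ R) ^ 2 • xiOuter ξ) := by
  refine ⟨{(1,0),(0,1),(1,1),(1,-1)}, gam, ?_, ?_⟩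
  · have he : ∀ i j : Fin 2, ContDiff ℝ (⊤ : ℕ∞) fun R : Matrix (Fin 2) (Fin 2) ℝ => R i j :=
      fun i j => contDiff_pi.mp (contDiff_pi.mp contDiff_id i) j
    intro ξ hξ
    simp only [Finset.mem_insert, Finset.mem_singleton] at hξ
    rcases hξ with rfl | rfl | rfl | rfl
    · rw [gam_a]
      exact sqrt_comp_smooth _ ((he 0 0).sub contDiff_const) _
        fun R hR => bound_00 R hR.2
    · rw [gam_b]
      exact sqrt_comp_smooth _ ((he 1 1).sub contDiff_const) _
        fun R hR => bound_11 R hR.2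
    · rw [gam_c]
      refine sqrt_comp_smooth _ ((contDiff_const.add (contDiff_const.mul (he 0 1))).div_const 4) _
        fun R hR => ?_
      have := (abs_lt.mp (bound_01 R hR.2)).1
      linarith
    · rw [gam_d]
      refine sqrt_comp_smooth _ ((contDiff_const.sub (contDiff_const.mul (he 0 1))).div_const 4) _
        fun R hR => ?_
      have := (abs_lt.mp (bound_01 R hR.2)).2
      linarith
  · intro R hsymm hR
    have h00 := (bound_00 R hR).le
    have h11 := (bound_11 R hR).le
    have h01 := abs_lt.mp (bound_01 R hR)
    have hc : (0:ℝ) ≤ (1 + 2 * R 0 1)/4 := by linarith [h01.1]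
    have hd : (0:ℝ) ≤ (1 - 2 * R 0 1)/4 := by linarith [h01.2]
    have hsum : ∑ ξ ∈ ({(1,0),(0,1),(1,1),(1,-1)} : Finset (ℤ × ℤ)),
        (gam ξ R) ^ 2 • xiOuter ξ
        = (gam (1,0) R) ^ 2 • xiOuter (1,0) + (gam (0,1) R) ^ 2 • xiOuter (0,1)
          + (gam (1,1) R) ^ 2 • xiOuter (1,1) + (gam (1,-1) R) ^ 2 • xiOuter (1,-1) := by
      rw [show ({(1,0),(0,1),(1,1),(1,-1)} : Finset (ℤ × ℤ))
          = insert (1,0) (insert (0,1) (insert (1,1) {(1,-1)})) from rfl]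
      rw [Finset.sum_insert (by decide), Finset.sum_insert (by decide),
        Finset.sum_insert (by decide), Finset.sum_singleton]
      abel
    rw [hsum, gam_a, gam_b, gam_c, gam_d]
    have sa : Real.sqrt (R 0 0 - 1/2) ^ 2 = R 0 0 - 1/2 := Real.sq_sqrt h00
    have sb : Real.sqrt (R 1 1 - 1/2) ^ 2 = R 1 1 - 1/2 := Real.sq_sqrt h11
    have sc : Real.sqrt ((1 + 2 * R 0 1)/4) ^ 2 = (1 + 2 * R 0 1)/4 := Real.sq_sqrt hc
    have sd : Real.sqrt ((1 - 2 * R 0 1)/4) ^ 2 = (1 - 2 * R 0 1)/4 := Real.sq_sqrt hd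
    have h10 : R 1 0 = R 0 1 := hsymm.apply 0 1
    ext i j
    simp only [Matrix.add_apply, Matrix.smul_apply, xiOuter, Matrix.vecMulVec_apply,
      smul_eq_mul, sa, sb, sc, sd]
    fin_cases i <;> fin_cases j <;>
      simp [Matrix.cons_val_zero, Matrix.cons_val_one, h10] <;> ring
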